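/- Let n ≥ 3 and let i, j be distinct indices in {1,…,n}. Then the normal subgroup of the Steinberg group St_n(ℤ) normally generated by the element h_{ij} contains the element a = h_{12}². -/

import Mathlib

/-! Conjugation by the Weyl element `ω_{ab}` renames the index `a` to `b` in the root
elements: `x_{ac}(r) ↦ x_{bc}(r)` and `x_{ca}(r) ↦ x_{cb}(r)`. Hence `ω_{ik}` conjugates
`h_{ij}` to `h_{kj}` and `ω_{jk}` conjugates it to `h_{ik}`, so a normal subgroup containing
one `h_{ij}` contains every `h_{pq}`: with a third index `k ∉ {i, p}`, which exists as `n ≥ 3`,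
one moves `(i, j) → (i, k) → (p, k) → (p, q)`. In particular it contains `a = h_{12}²`. -/

namespace Steinberg

open scoped commutatorElement

/-- Generators of the Steinberg group `St_n(ℤ)`: a symbol `x_{ij}(r)` for each
pair of distinct indices `i ≠ j` in `Fin n` and each integer `r`. -/
def Gen (n : ℕ) : Type := { p : Fin n × Fin n // p.1 ≠ p.2 } × ℤ

/-- The Steinberg relations: `x_{ij}(r) x_{ij}(s) = x_{ij}(r+s)`,
`⁅x_{ij}(r), x_{jk}(s)⁆ = x_{ik}(rs)` for `i ≠ k`, and
`⁅x_{ij}(r), x_{pq}(s)⁆ = 1` for `j ≠ p`, `i ≠ q`. -/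
def rels (n : ℕ) : Set (FreeGroup (Gen n)) :=
  { w | (∃ (i j : Fin n) (h : i ≠ j) (r s : ℤ),
      w = FreeGroup.of (⟨⟨i, j⟩, h⟩, r) * FreeGroup.of (⟨⟨i, j⟩, h⟩, s) *
          (FreeGroup.of (⟨⟨i, j⟩, h⟩, r + s))⁻¹) ∨
    (∃ (i j k : Fin n) (hij : i ≠ j) (hjk : j ≠ k) (hik : i ≠ k) (r s : ℤ),
      w = ⁅FreeGroup.of ((⟨⟨i, j⟩, hij⟩ : { p : Fin n × Fin n // p.1 ≠ p.2 }), r),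
           FreeGroup.of ((⟨⟨j, k⟩, hjk⟩ : { p : Fin n × Fin n // p.1 ≠ p.2 }), s)⁆ *
          (FreeGroup.of (⟨⟨i, k⟩, hik⟩, r * s))⁻¹) ∨
    (∃ (i j p q : Fin n) (hij : i ≠ j) (hpq : p ≠ q) (r s : ℤ),
      j ≠ p ∧ i ≠ q ∧
      w = ⁅FreeGroup.of ((⟨⟨i, j⟩, hij⟩ : { p : Fin n × Fin n // p.1 ≠ p.2 }), r),
           FreeGroup.of ((⟨⟨p, q⟩, hpq⟩ : { p : Fin n × Fin n // p.1 ≠ p.2 }), s)⁆) }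

/-- The Steinberg group `St_n(ℤ)`, presented by the generators `x_{ij}(r)` and the
Steinberg relations. -/
def St (n : ℕ) : Type := PresentedGroup (rels n)

instance (n : ℕ) : Group (St n) := by unfold St; infer_instance

/-- The generator `x_{ij}(r)` of `St_n(ℤ)`. -/
def x {n : ℕ} (i j : Fin n) (h : i ≠ j) (r : ℤ) : St n :=
  PresentedGroup.of (⟨⟨i, j⟩, h⟩, r)

/-- `ω_{ij} = x_{ij}(-1) x_{ji}(1) x_{ij}(-1)`. -/
def w {n : ℕ} (i j : Fin n) (h : i ≠ j) : St n :=
  x i j h (-1) * x j i h.symm 1 * x i j h (-1)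

/-- `h_{ij} = ω_{ij} ω_{ij}`. -/
def hElt {n : ℕ} (i j : Fin n) (h : i ≠ j) : St n := w i j h * w i j h

/-- The central element `a = h_{12}²` (indices `1,2` are `⟨0,_⟩, ⟨1,_⟩ : Fin n`). -/
def aElt {n : ℕ} (hn : 3 ≤ n) : St n :=
  hElt (⟨0, by omega⟩ : Fin n) (⟨1, by omega⟩ : Fin n) (by simp [Fin.ext_iff]) ^ 2

end Steinberg

namespace Steinberg

open scoped commutatorElement

variable {n : ℕ}

section Relations

variable (i j : Fin n) (hij : i ≠ j)

theorem x_add (r s : ℤ) : x i j hij r * x i j hij s = x i j hij (r + s) :=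
  PresentedGroup.mk_eq_mk_of_mul_inv_mem (Or.inl ⟨i, j, hij, r, s, rfl⟩)

theorem commutatorElement_x_x (k : Fin n) (hjk : j ≠ k) (hik : i ≠ k) (r s : ℤ) :
    ⁅x i j hij r, x j k hjk s⁆ = x i k hik (r * s) :=
  PresentedGroup.mk_eq_mk_of_mul_inv_mem (Or.inr (Or.inl ⟨i, j, k, hij, hjk, hik, r, s, rfl⟩))

theorem commute_x_x {p q : Fin n} (hpq : p ≠ q) (hjp : j ≠ p) (hiq : i ≠ q) (r s : ℤ) :
    Commute (x i j hij r) (x p q hpq s) :=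
  commutatorElement_eq_one_iff_commute.mp <|
    PresentedGroup.one_of_mem (Or.inr (Or.inr ⟨i, j, p, q, hij, hpq, r, s, hjp, hiq, rfl⟩))

theorem x_zero : x i j hij 0 = 1 :=
  by simpa using x_add i j hij 0 0

theorem x_neg (r : ℤ) : x i j hij (-r) = (x i j hij r)⁻¹ :=
  eq_inv_of_mul_eq_one_left (by rw [x_add, neg_add_cancel, x_zero])

end Relations

section Conjugation

theorem conj_x_x_of_ne {i j p q : Fin n} (hij : i ≠ j) (hpq : p ≠ q) (hqi : q ≠ i) (hpj : p ≠ j)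
    (r t : ℤ) :
    MulAut.conj (x p q hpq t) (x i j hij r) = x i j hij r := by
  rw [MulAut.conj_apply, (commute_x_x p q hpq hij hqi hpj t r).eq, mul_inv_cancel_right]

theorem conj_x_x_of_snd_eq_fst {i j p : Fin n} (hij : i ≠ j) (hpi : p ≠ i) (hpj : p ≠ j)
    (r t : ℤ) :
    MulAut.conj (x p i hpi t) (x i j hij r) = x p j hpj (t * r) * x i j hij r := by
  rw [MulAut.conj_apply, ← commutatorElement_x_x p i hpi j hij hpj, commutatorElement_def]
  group

theorem conj_x_x_of_fst_eq_snd {i j q : Fin n} (hij : i ≠ j) (hjq : j ≠ q) (hiq : i ≠ q)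
    (r t : ℤ) :
    MulAut.conj (x j q hjq t) (x i j hij r) = x i j hij r * x i q hiq (-r * t) := by
  rw [MulAut.conj_apply, ← commutatorElement_x_x i j hij q hjq hiq, x_neg,
    commutatorElement_def]
  group

theorem conj_w_x_of_fst {a b c : Fin n} (hab : a ≠ b) (hac : a ≠ c) (hbc : b ≠ c) (r : ℤ) :
    MulAut.conj (w a b hab) (x a c hac r) = x b c hbc r := by
  simp only [w, map_mul, MulAut.mul_apply, conj_x_x_of_ne hac hab hab.symm hac,
    conj_x_x_of_snd_eq_fst hac hab.symm hbc, conj_x_x_of_snd_eq_fst hbc hab hac,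
    one_mul, neg_one_mul]
  rw [mul_assoc, (commute_x_x b c hbc hac hac.symm hbc r r).eq, ← mul_assoc, x_add,
    neg_add_cancel, x_zero, one_mul]

theorem conj_w_x_of_snd {a b c : Fin n} (hab : a ≠ b) (hca : c ≠ a) (hcb : c ≠ b) (r : ℤ) :
    MulAut.conj (w a b hab) (x c a hca r) = x c b hcb r := by
  simp only [w, map_mul, MulAut.mul_apply, conj_x_x_of_fst_eq_snd hca hab hcb,
    conj_x_x_of_ne hca hab.symm hca.symm hab.symm,
    conj_x_x_of_fst_eq_snd hcb hab.symm hca, conj_x_x_of_ne hcb hab hcb.symm hab,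
    mul_one, mul_neg_one, neg_neg]
  rw [(commute_x_x c a hca hcb hca.symm hcb (-r) (-r)).eq, ← mul_assoc (x c b hcb r), x_add,
    add_neg_cancel, x_zero, one_mul, (commute_x_x c a hca hcb hca.symm hcb r r).eq, mul_assoc,
    x_add, add_neg_cancel, x_zero, mul_one]

theorem conj_w_w_of_fst {i j k : Fin n} (hij : i ≠ j) (hik : i ≠ k) (hkj : k ≠ j) :
    MulAut.conj (w i k hik) (w i j hij) = w k j hkj := by
  rw [w.eq_1 i j hij, map_mul, map_mul, conj_w_x_of_fst hik hij hkj,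
    conj_w_x_of_snd hik hij.symm hkj.symm]
  rfl

theorem conj_w_w_of_snd {i j k : Fin n} (hij : i ≠ j) (hjk : j ≠ k) (hik : i ≠ k) :
    MulAut.conj (w j k hjk) (w i j hij) = w i k hik := by
  rw [w.eq_1 i j hij, map_mul, map_mul, conj_w_x_of_snd hjk hij hik,
    conj_w_x_of_fst hjk hij.symm hik.symm]
  rfl

end Conjugation

section NormalSubgroup

variable {N : Subgroup (St n)} {i j : Fin n} {hij : i ≠ j}

theorem hElt_mem_of_fst (hN : N.Normal) (h : hElt i j hij ∈ N) {k : Fin n} (hkj : k ≠ j) :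
    hElt k j hkj ∈ N := by
  obtain rfl | hik := eq_or_ne i k
  · exact h
  · have : MulAut.conj (w i k hik) (hElt i j hij) = hElt k j hkj := by
      rw [hElt, map_mul, conj_w_w_of_fst hij hik hkj, hElt]
    rw [← this, MulAut.conj_apply]
    exact hN.conj_mem _ h _

theorem hElt_mem_of_snd (hN : N.Normal) (h : hElt i j hij ∈ N) {k : Fin n} (hik : i ≠ k) :
    hElt i k hik ∈ N := by
  obtain rfl | hjk := eq_or_ne j k
  · exact h
  · have : MulAut.conj (w j k hjk) (hElt i j hij) = hElt i k hik := by
      rw [hElt, map_mul, conj_w_w_of_snd hij hjk hik, hElt]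
    rw [← this, MulAut.conj_apply]
    exact hN.conj_mem _ h _

theorem hElt_mem_of_two_lt (hN : N.Normal) (hn : 2 < n) (h : hElt i j hij ∈ N) {p q : Fin n}
    (hpq : p ≠ q) :
    hElt p q hpq ∈ N := by
  obtain ⟨k, hki, hkp⟩ := Fin.exists_ne_and_ne_of_two_lt i p hn
  exact hElt_mem_of_snd hN (hElt_mem_of_fst hN (hElt_mem_of_snd hN h hki.symm) hkp.symm) hpq

end NormalSubgroup

end Steinberg

open Steinberg in
/-- For `n ≥ 3` and distinct `i,j`, the normal subgroup of `St_n(ℤ)` normally generated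
by `h_{ij}` contains `a = h_{12}²`. -/
theorem steinberg_normalClosure_h_contains_a (n : ℕ) (hn : 3 ≤ n) (i j : Fin n)
    (hij : i ≠ j) :
    aElt hn ∈ Subgroup.normalClosure ({hElt i j hij} : Set (St n)) :=
  pow_mem (hElt_mem_of_two_lt Subgroup.normalClosure_normal hn
    (Subgroup.subset_normalClosure (Set.mem_singleton _)) _) 2
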